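/- arXiv:1605.07221 — 2 statements merged into one kernel-verified Lean document; each statement's English description precedes it below -/
import Mathlib

section
/- Suppose each A_i is symmetric. (a) For every U, Z ∈ ℝ^{n×r}, the map t ↦ f(U + tZ) is twice differentiable and its second derivative at t = 0 equals Σ_{i=1}^m [8·⟨A_i, U·Zᵀ⟩² + 4·(⟨A_i, U·Uᵀ⟩ − y_i)·⟨A_i, Z·Zᵀ⟩]. (b) If moreover y_i = ⟨A_i, X*⟩ with X* = U*·U*ᵀ for some U* ∈ ℝ^{n×r}, U satisfies Σ_{i=1}^m ⟨A_i, U·Uᵀ − X*⟩·A_i·U = 0, R is an r×r orthogonal matrix, and Δ_j := (U − U*R)·e_j·e_jᵀ for j = 1,…,r (e_j the standard basis of ℝ^r), then Σ_{j=1}^r (d²/dt²)|_{t=0} f(U + tΔ_j) = 4·Σ_{i=1}^m [2·Σ_{j=1}^r ⟨A_i, U·Δ_jᵀ⟩² − ⟨A_i, U·Uᵀ − X*⟩²]. -/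
open Matrix MeasureTheory BigOperators

/-- Matrix inner product `⟨A, X⟩ = trace(Aᵀ X)`. -/
noncomputable def mip {n : ℕ} (A X : Matrix (Fin n) (Fin n) ℝ) : ℝ :=
  (Aᵀ * X).trace

/-- Frobenius norm of a real matrix. -/
noncomputable def frob {n₁ n₂ : ℕ} (M : Matrix (Fin n₁) (Fin n₂) ℝ) : ℝ :=
  Real.sqrt (∑ i, ∑ j, (M i j) ^ 2)

/-- `(k, δ)`-restricted isometry property of the measurement operator `A`. -/
def RIP {n m : ℕ} (A : Fin m → Matrix (Fin n) (Fin n) ℝ) (k : ℕ) (δ : ℝ) : Prop :=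
  ∀ X : Matrix (Fin n) (Fin n) ℝ, X.rank ≤ k →
    (1 - δ) * frob X ^ 2 ≤ (1 / (m : ℝ)) * ∑ i, mip (A i) X ^ 2 ∧
    (1 / (m : ℝ)) * ∑ i, mip (A i) X ^ 2 ≤ (1 + δ) * frob X ^ 2

/-- Objective `f(U) = ∑ i, (⟨A i, U Uᵀ⟩ - y i)²`. -/
noncomputable def fobj {n m r : ℕ} (A : Fin m → Matrix (Fin n) (Fin n) ℝ) (y : Fin m → ℝ)
    (U : Matrix (Fin n) (Fin r) ℝ) : ℝ :=
  ∑ i, (mip (A i) (U * Uᵀ) - y i) ^ 2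

/-!
Along a line, each residual `⟨A_i, (U + sZ)(U + sZ)ᵀ⟩ - y_i` is the quadratic
`p_i + 2⟨A_i, UZᵀ⟩ s + ⟨A_i, ZZᵀ⟩ s²` (symmetry of `A_i` merges the two cross terms), so
`s ↦ f(U + sZ)` is a sum of squares of quadratics `q_i`, with second derivative
`Σ_i 2 q_i'(0)² + 2 q_i(0) q_i''(0)` at `0`.

For the directions `Δ_j = Δ e_j e_jᵀ` with `Δ = U - U*R` one has `Σ_j Δ_j Δ_jᵀ = Δ Δᵀ`.
Stationarity says `S U = 0` for the symmetric `S = Σ_i ⟨A_i, UUᵀ - X*⟩ A_i`, so `⟨S, ·⟩` kills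
every term of `Δ Δᵀ` containing `U`, leaving `⟨S, X*⟩ = -⟨S, UUᵀ - X*⟩ = -Σ_i ⟨A_i, UUᵀ - X*⟩²`.
-/

section Quadratic

variable {ι : Type*} [Fintype ι]

lemma hasDerivAt_quadratic (p b c t : ℝ) :
    HasDerivAt (fun s : ℝ => p + b * s + c * s ^ 2) (b + 2 * c * t) t :=
  (((hasDerivAt_id' t).const_mul b).const_add p |>.fun_add
    ((hasDerivAt_pow 2 t).const_mul c)).congr_deriv (by ring)

lemma hasDerivAt_sum_sq_quadratic (p b c : ι → ℝ) (t : ℝ) :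
    HasDerivAt (fun s : ℝ => ∑ i, (p i + b i * s + c i * s ^ 2) ^ 2)
      (∑ i, 2 * (p i + b i * t + c i * t ^ 2) * (b i + 2 * c i * t)) t :=
  HasDerivAt.fun_sum fun i _ =>
    ((hasDerivAt_quadratic (p i) (b i) (c i) t).fun_pow 2).congr_deriv (by ring)

lemma deriv_sum_sq_quadratic (p b c : ι → ℝ) :
    deriv (fun s : ℝ => ∑ i, (p i + b i * s + c i * s ^ 2) ^ 2) =
      fun t => ∑ i, 2 * (p i + b i * t + c i * t ^ 2) * (b i + 2 * c i * t) :=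
  funext fun t => (hasDerivAt_sum_sq_quadratic p b c t).deriv

lemma hasDerivAt_deriv_sum_sq_quadratic (p b c : ι → ℝ) (t : ℝ) :
    HasDerivAt (deriv fun s : ℝ => ∑ i, (p i + b i * s + c i * s ^ 2) ^ 2)
      (∑ i, (2 * (b i + 2 * c i * t) ^ 2 + 4 * (p i + b i * t + c i * t ^ 2) * c i)) t := by
  rw [deriv_sum_sq_quadratic]
  exact HasDerivAt.fun_sum fun i _ =>
    (((hasDerivAt_quadratic (p i) (b i) (c i) t).const_mul 2).fun_mul
      (((hasDerivAt_id' t).const_mul (2 * c i)).const_add (b i))).congr_deriv (by ring)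

end Quadratic

section InnerProduct

variable {n : ℕ} {ι : Type*} [Fintype ι]

lemma mip_add_right (A X Y : Matrix (Fin n) (Fin n) ℝ) : mip A (X + Y) = mip A X + mip A Y := by
  simp [mip, Matrix.mul_add]

lemma mip_sub_right (A X Y : Matrix (Fin n) (Fin n) ℝ) : mip A (X - Y) = mip A X - mip A Y := by
  simp [mip, Matrix.mul_sub]

lemma mip_smul_right (A X : Matrix (Fin n) (Fin n) ℝ) (s : ℝ) : mip A (s • X) = s * mip A X := by
  simp [mip]

lemma mip_sum_right (A : Matrix (Fin n) (Fin n) ℝ) (X : ι → Matrix (Fin n) (Fin n) ℝ) :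
    mip A (∑ j, X j) = ∑ j, mip A (X j) := by
  simp [mip, Matrix.mul_sum]

lemma mip_sum_smul_left (c : ι → ℝ) (A : ι → Matrix (Fin n) (Fin n) ℝ)
    (X : Matrix (Fin n) (Fin n) ℝ) : mip (∑ i, c i • A i) X = ∑ i, c i * mip (A i) X := by
  simp [mip, Matrix.sum_mul, Matrix.transpose_sum]

lemma mip_transpose_right {A : Matrix (Fin n) (Fin n) ℝ} (hA : Aᵀ = A)
    (X : Matrix (Fin n) (Fin n) ℝ) : mip A Xᵀ = mip A X := by
  rw [mip, mip, ← trace_transpose, transpose_mul, transpose_transpose, hA, trace_mul_comm, hA]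

lemma mip_mul_right_eq_zero {S : Matrix (Fin n) (Fin n) ℝ} {U : Matrix (Fin n) ι ℝ}
    (h : Sᵀ * U = 0) (M : Matrix ι (Fin n) ℝ) : mip S (U * M) = 0 := by
  rw [mip, ← Matrix.mul_assoc, h, Matrix.zero_mul, trace_zero]

lemma mip_mul_transpose_eq_zero {S : Matrix (Fin n) (Fin n) ℝ} {U : Matrix (Fin n) ι ℝ}
    (h : S * U = 0) (M : Matrix (Fin n) ι ℝ) : mip S (M * Uᵀ) = 0 := by
  rw [mip, trace_mul_comm, Matrix.mul_assoc, ← transpose_mul, h, transpose_zero,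
    Matrix.mul_zero, trace_zero]

lemma mip_sub_mul_transpose_sub {S : Matrix (Fin n) (Fin n) ℝ} (hS : Sᵀ = S)
    {U : Matrix (Fin n) ι ℝ} (hSU : S * U = 0) (V : Matrix (Fin n) ι ℝ) :
    mip S ((U - V) * (U - V)ᵀ) = -mip S (U * Uᵀ - V * Vᵀ) := by
  have hUM : ∀ M : Matrix ι (Fin n) ℝ, mip S (U * M) = 0 := mip_mul_right_eq_zero (hS.symm ▸ hSU)
  simp only [transpose_sub, Matrix.sub_mul, Matrix.mul_sub, mip_sub_right, hUM,
    mip_mul_transpose_eq_zero hSU]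
  ring

end InnerProduct

lemma sum_mul_single_mul_transpose {κ ι α : Type*} [Fintype ι] [DecidableEq ι] [CommSemiring α]
    (Δ : Matrix κ ι α) :
    ∑ j : ι, (Δ * single j j (1 : α)) * (Δ * single j j (1 : α))ᵀ = Δ * Δᵀ := by
  have h (j : ι) :
      (Δ * single j j (1 : α)) * (Δ * single j j (1 : α))ᵀ = Δ * single j j (1 : α) * Δᵀ := by
    rw [transpose_mul, transpose_single, Matrix.mul_assoc, ← Matrix.mul_assoc (single j j 1),
      single_mul_single_same, one_mul, Matrix.mul_assoc]
  rw [Finset.sum_congr rfl fun j _ => h j, ← Matrix.sum_mul, ← Matrix.mul_sum, sum_single_one,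
    Matrix.mul_one]

section Objective

variable {n m r : ℕ} {A : Fin m → Matrix (Fin n) (Fin n) ℝ}

lemma fobj_add_smul (hsym : ∀ i, (A i)ᵀ = A i) (y : Fin m → ℝ) (U Z : Matrix (Fin n) (Fin r) ℝ) :
    (fun s : ℝ => fobj A y (U + s • Z)) = fun s => ∑ i, ((mip (A i) (U * Uᵀ) - y i) +
      2 * mip (A i) (U * Zᵀ) * s + mip (A i) (Z * Zᵀ) * s ^ 2) ^ 2 := by
  funext s
  refine Finset.sum_congr rfl fun i _ => ?_
  have hZU : Z * Uᵀ = (U * Zᵀ)ᵀ := by rw [transpose_mul, transpose_transpose]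
  simp only [transpose_add, transpose_smul, Matrix.add_mul, Matrix.mul_add, Matrix.smul_mul,
    Matrix.mul_smul, mip_add_right, mip_smul_right, hZU, mip_transpose_right (hsym i)]
  ring

lemma deriv_deriv_fobj_add_smul (hsym : ∀ i, (A i)ᵀ = A i) (y : Fin m → ℝ)
    (U Z : Matrix (Fin n) (Fin r) ℝ) :
    deriv (deriv fun s : ℝ => fobj A y (U + s • Z)) 0 =
      ∑ i, (8 * mip (A i) (U * Zᵀ) ^ 2 + 4 * (mip (A i) (U * Uᵀ) - y i) * mip (A i) (Z * Zᵀ)) := by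
  rw [fobj_add_smul hsym, (hasDerivAt_deriv_sum_sq_quadratic _ _ _ 0).deriv]
  exact Finset.sum_congr rfl fun i _ => by ring

theorem sum_deriv_deriv_fobj_add_smul_mul_single (hsym : ∀ i, (A i)ᵀ = A i) {y : Fin m → ℝ}
    {U Ustar : Matrix (Fin n) (Fin r) ℝ} {Xstar : Matrix (Fin n) (Fin n) ℝ}
    {R : Matrix (Fin r) (Fin r) ℝ} (hX : Xstar = Ustar * Ustarᵀ) (hy : ∀ i, y i = mip (A i) Xstar)
    (hR : Rᵀ * R = 1) (hstat : ∑ i, mip (A i) (U * Uᵀ - Xstar) • (A i * U) = 0) :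
    ∑ j : Fin r, deriv (deriv fun s : ℝ =>
        fobj A y (U + s • ((U - Ustar * R) * single j j (1 : ℝ)))) 0 =
      4 * ∑ i, (2 * (∑ j : Fin r,
          mip (A i) (U * ((U - Ustar * R) * single j j (1 : ℝ))ᵀ) ^ 2) -
        mip (A i) (U * Uᵀ - Xstar) ^ 2) := by
  set Δ := U - Ustar * R
  set c : Fin m → ℝ := fun i => mip (A i) (U * Uᵀ - Xstar)
  set S := ∑ i, c i • A i
  have hS : Sᵀ = S := by simp only [S, transpose_sum, transpose_smul, hsym]
  have hSU : S * U = 0 := by simpa only [S, Matrix.sum_mul, Matrix.smul_mul] using hstat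
  have hV : (Ustar * R) * (Ustar * R)ᵀ = Xstar := by
    rw [transpose_mul, Matrix.mul_assoc, ← Matrix.mul_assoc R, mul_eq_one_comm.mp hR,
      Matrix.one_mul, hX]
  have hcross : ∑ i, c i * mip (A i) (Δ * Δᵀ) = -∑ i, c i ^ 2 := by
    have := mip_sub_mul_transpose_sub hS hSU (Ustar * R)
    simp only [S, hV, mip_sum_smul_left] at this
    simpa only [sq] using this
  have hdiag (i : Fin m) :
      ∑ j : Fin r, mip (A i) ((Δ * single j j (1 : ℝ)) * (Δ * single j j (1 : ℝ))ᵀ) =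
        mip (A i) (Δ * Δᵀ) := by rw [← mip_sum_right, sum_mul_single_mul_transpose]
  have hres : ∀ i, mip (A i) (U * Uᵀ) - y i = c i := fun i => by rw [hy, ← mip_sub_right]
  simp only [deriv_deriv_fobj_add_smul hsym, hres]
  rw [Finset.sum_comm]
  simp only [Finset.sum_add_distrib, ← Finset.mul_sum, hdiag, mul_assoc, hcross,
    Finset.sum_sub_distrib]
  ring

end Objective

theorem hessian_computation_general {n m r : ℕ}
    (A : Fin m → Matrix (Fin n) (Fin n) ℝ) (hsym : ∀ i, (A i)ᵀ = A i)
    (y : Fin m → ℝ) :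
    (∀ U Z : Matrix (Fin n) (Fin r) ℝ,
      (∀ t : ℝ, DifferentiableAt ℝ (fun s : ℝ => fobj A y (U + s • Z)) t) ∧
      (∀ t : ℝ, DifferentiableAt ℝ (deriv fun s : ℝ => fobj A y (U + s • Z)) t) ∧
      deriv (deriv fun s : ℝ => fobj A y (U + s • Z)) 0 =
        ∑ i, (8 * mip (A i) (U * Zᵀ) ^ 2 +
          4 * (mip (A i) (U * Uᵀ) - y i) * mip (A i) (Z * Zᵀ))) ∧
    (∀ (U Ustar : Matrix (Fin n) (Fin r) ℝ) (Xstar : Matrix (Fin n) (Fin n) ℝ)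
        (R : Matrix (Fin r) (Fin r) ℝ),
      Xstar = Ustar * Ustarᵀ →
      (∀ i, y i = mip (A i) Xstar) →
      Rᵀ * R = 1 →
      (∑ i, mip (A i) (U * Uᵀ - Xstar) • (A i * U) = 0) →
      ∑ j : Fin r,
          deriv (deriv fun s : ℝ =>
            fobj A y (U + s • ((U - Ustar * R) * Matrix.single j j (1 : ℝ)))) 0 =
        4 * ∑ i, (2 * (∑ j : Fin r,
            mip (A i) (U * ((U - Ustar * R) * Matrix.single j j (1 : ℝ))ᵀ) ^ 2) -
          mip (A i) (U * Uᵀ - Xstar) ^ 2)) := by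
  refine ⟨fun U Z => ⟨fun t => ?_, fun t => ?_, deriv_deriv_fobj_add_smul hsym y U Z⟩,
    fun U Ustar Xstar R => sum_deriv_deriv_fobj_add_smul_mul_single hsym⟩
  · rw [fobj_add_smul hsym]
    exact (hasDerivAt_sum_sq_quadratic _ _ _ t).differentiableAt
  · rw [fobj_add_smul hsym]
    exact (hasDerivAt_deriv_sum_sq_quadratic _ _ _ t).differentiableAt

/-- Hessian computation: (a) second derivative of `f` along any direction `Z`;
(b) its value summed along the directions `Δ_j = (U - U*R) e_j e_jᵀ` at a stationary point. -/
theorem hessian_computation {n m r : ℕ} (hn : 0 < n) (hm : 0 < m) (hr : 0 < r)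
    (A : Fin m → Matrix (Fin n) (Fin n) ℝ) (hsym : ∀ i, (A i)ᵀ = A i)
    (y : Fin m → ℝ) :
    (∀ U Z : Matrix (Fin n) (Fin r) ℝ,
      (∀ t : ℝ, DifferentiableAt ℝ (fun s : ℝ => fobj A y (U + s • Z)) t) ∧
      (∀ t : ℝ, DifferentiableAt ℝ (deriv fun s : ℝ => fobj A y (U + s • Z)) t) ∧
      deriv (deriv fun s : ℝ => fobj A y (U + s • Z)) 0 =
        ∑ i, (8 * mip (A i) (U * Zᵀ) ^ 2 +
          4 * (mip (A i) (U * Uᵀ) - y i) * mip (A i) (Z * Zᵀ))) ∧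
    (∀ (U Ustar : Matrix (Fin n) (Fin r) ℝ) (Xstar : Matrix (Fin n) (Fin n) ℝ)
        (R : Matrix (Fin r) (Fin r) ℝ),
      Xstar = Ustar * Ustarᵀ →
      (∀ i, y i = mip (A i) Xstar) →
      Rᵀ * R = 1 →
      (∑ i, mip (A i) (U * Uᵀ - Xstar) • (A i * U) = 0) →
      ∑ j : Fin r,
          deriv (deriv fun s : ℝ =>
            fobj A y (U + s • ((U - Ustar * R) * Matrix.single j j (1 : ℝ)))) 0 =
        4 * ∑ i, (2 * (∑ j : Fin r,
            mip (A i) (U * ((U - Ustar * R) * Matrix.single j j (1 : ℝ))ᵀ) ^ 2) -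
          mip (A i) (U * Uᵀ - Xstar) ^ 2)) :=
  hessian_computation_general A hsym y
end

section
/- Suppose the measurement operator satisfies (2r, δ)-RIP, X* ∈ ℝ^{n×n} is symmetric positive semidefinite with best rank-r approximation X_r* (the truncated spectral decomposition keeping the r largest eigenvalues), and U ∈ ℝ^{n×r} satisfies the first-order stationarity equation Σ_{i=1}^m ⟨A_i, U·Uᵀ − X*⟩·A_i·U = 0. Let P ∈ ℝ^{n×n} be the orthogonal projection onto the column space of U. Then ‖U·Uᵀ − P·X_r*‖_F ≤ δ·‖U·Uᵀ − X_r*‖_F + ‖(X* − X_r*)·P‖_F + δ·‖X* − X_r*‖_*, where ‖·‖_* denotes the nuclear norm (the sum of the singular values). -/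
open Matrix MeasureTheory BigOperators

/-- Nuclear norm: sum of the singular values (square roots of eigenvalues of `MᵀM = Mᴴ M`). -/
noncomputable def nuclearNorm {n : ℕ} (M : Matrix (Fin n) (Fin n) ℝ) : ℝ :=
  ∑ i, Real.sqrt ((Matrix.isHermitian_conjTranspose_mul_self M).eigenvalues i)

/-!
Let `Y = UUᵀ - X_r` and `M = X* - X_r`. Since `P` fixes the columns of `U`, the error is
`E = UUᵀ - P X_r = P Y`, so `‖E‖² = ⟨E, Y⟩ = ⟨Eᵀ, Y⟩`. As `P = U C`, the matrix `Eᵀ = Y P` has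
the form `V Uᵀ`, and pairing the stationarity equation with `V` says that the measured correlation
`(1/m) ∑ᵢ ⟨Aᵢ, Eᵀ⟩⟨Aᵢ, UUᵀ - X*⟩` vanishes. Writing `Y = (UUᵀ - X*) + M`, `‖E‖²` becomes the
RIP defect `⟨Eᵀ, Y⟩ - (1/m) ∑ᵢ ⟨Aᵢ, Eᵀ⟩⟨Aᵢ, Y⟩`, minus the same defect for `(Eᵀ, M)`, plus
`⟨E, P M⟩`. By polarization, `(2r, δ)`-RIP bounds the defect of a pair spanning only matrices of
rank `≤ 2r` by `δ` times the product of their norms. This handles `(Eᵀ, Y)` directly; for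
`(Eᵀ, M)` we split `M` into its rank-one spectral pieces, whose weights add up to `‖M‖_*`.
Cauchy–Schwarz bounds `⟨E, P M⟩` by `‖E‖ ‖M P‖`, and dividing by `‖E‖` gives the claim.
-/

open scoped InnerProductSpace

namespace Matrix

variable {l m n R : Type*}

theorem exists_mul_eq_of_range_le [CommSemiring R] [Fintype l] [Fintype n] [DecidableEq n]
    {A : Matrix m l R} {B : Matrix m n R}
    (h : LinearMap.range B.mulVecLin ≤ LinearMap.range A.mulVecLin) :
    ∃ C : Matrix l n R, A * C = B := by
  choose c hc using fun j => h ⟨Pi.single j 1, rfl⟩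
  refine ⟨of fun k j => c j k, ?_⟩
  ext i j
  simpa [mul_apply, mulVec, dotProduct, Pi.single_apply] using congr_fun (hc j) i

theorem transpose_mul_diagonal_mul_transpose [CommSemiring R] [Fintype n] [DecidableEq n]
    (Q : Matrix m n R) (d : n → R) : (Q * diagonal d * Qᵀ)ᵀ = Q * diagonal d * Qᵀ := by
  simp [transpose_mul, Matrix.mul_assoc]

theorem mul_diagonal_mul_transpose_eq_sum [CommSemiring R] [Fintype n] [DecidableEq n]
    (Q : Matrix m n R) (d : n → R) :
    Q * diagonal d * Qᵀ = ∑ j, d j • vecMulVec (Qᵀ j) (Qᵀ j) := by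
  ext a b
  rw [mul_apply]
  simp only [mul_diagonal, transpose_apply, sum_apply, smul_apply, vecMulVec_apply, smul_eq_mul]
  exact Finset.sum_congr rfl fun j _ => by ring

theorem mul_diagonal_mul_transpose_sub_ite [CommRing R] [Fintype n] [DecidableEq n]
    (Q : Matrix m n R) (d : n → R) (p : n → Prop) [DecidablePred p] :
    Q * diagonal d * Qᵀ - Q * diagonal (fun i => if p i then d i else 0) * Qᵀ
      = Q * diagonal (fun i => if p i then 0 else d i) * Qᵀ := by
  rw [← Matrix.sub_mul, ← Matrix.mul_sub, diagonal_sub]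
  congr
  ext i
  split_ifs <;> simp

variable [Field R] [Fintype n]

theorem rank_add_le (A B : Matrix m n R) : (A + B).rank ≤ A.rank + B.rank := by
  rw [rank, rank, rank, mulVecLin_add]
  exact (Submodule.finrank_mono (LinearMap.range_add_le _ _)).trans
    (Submodule.finrank_add_le_finrank_add_finrank _ _)

theorem rank_smul_le [DecidableEq n] (c : R) (A : Matrix m n R) : (c • A).rank ≤ A.rank := by
  simpa using rank_mul_le_left A (c • 1 : Matrix n n R)

theorem rank_sub_le [DecidableEq n] (A B : Matrix m n R) : (A - B).rank ≤ A.rank + B.rank := by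
  simpa [sub_eq_add_neg] using
    (rank_add_le A ((-1 : R) • B)).trans (by gcongr; exact rank_smul_le _ _)

end Matrix

theorem rank_diagonal_ite_lt_le {n : ℕ} (lam : Fin n → ℝ) (r : ℕ) :
    (diagonal fun i : Fin n => if (i : ℕ) < r then lam i else 0).rank ≤ r := by
  classical
  rw [rank_diagonal]
  calc _ ≤ Fintype.card {i : Fin n // (i : ℕ) < r} :=
        Fintype.card_subtype_mono _ _ fun i hi => by by_contra h; simp [h] at hi
    _ = min n r := by simpa [Fintype.card_subtype] using Fin.card_filter_val_lt
    _ ≤ r := min_le_right _ _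

section Frobenius

variable {a b n : ℕ}

noncomputable def flatten : Matrix (Fin a) (Fin b) ℝ →ₗ[ℝ] EuclideanSpace ℝ (Fin a × Fin b) where
  toFun M := WithLp.toLp 2 fun p => M p.1 p.2
  map_add' _ _ := rfl
  map_smul' _ _ := rfl

@[simp] lemma flatten_apply (M : Matrix (Fin a) (Fin b) ℝ) (p : Fin a × Fin b) :
    flatten M p = M p.1 p.2 := rfl

lemma frob_eq_norm_flatten (M : Matrix (Fin a) (Fin b) ℝ) : frob M = ‖flatten M‖ := by
  simp [frob, EuclideanSpace.norm_eq, Fintype.sum_prod_type]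

lemma mip_eq_inner_flatten (A X : Matrix (Fin n) (Fin n) ℝ) :
    mip A X = ⟪flatten A, flatten X⟫_ℝ := by
  simp only [mip, trace, diag, mul_apply, transpose_apply, PiLp.inner_apply, flatten_apply,
    Fintype.sum_prod_type, Real.inner_apply]
  exact Finset.sum_comm

lemma frob_nonneg (M : Matrix (Fin a) (Fin b) ℝ) : 0 ≤ frob M := Real.sqrt_nonneg _

lemma frob_transpose (M : Matrix (Fin a) (Fin b) ℝ) : frob Mᵀ = frob M := by
  rw [frob, frob, Finset.sum_comm]
  rfl

lemma frob_sq (M : Matrix (Fin n) (Fin n) ℝ) : frob M ^ 2 = mip M M := by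
  rw [frob_eq_norm_flatten, mip_eq_inner_flatten, real_inner_self_eq_norm_sq]

lemma frob_vecMulVec_self (v : Fin n → ℝ) : frob (vecMulVec v v) = v ⬝ᵥ v := by
  have hv : 0 ≤ v ⬝ᵥ v := Fintype.sum_nonneg fun i => mul_self_nonneg (v i)
  rw [frob, ← Real.sqrt_sq hv]
  congr 1
  simp only [vecMulVec_apply, dotProduct, sq, Finset.sum_mul_sum, mul_mul_mul_comm]

lemma abs_mip_le (A X : Matrix (Fin n) (Fin n) ℝ) : |mip A X| ≤ frob A * frob X := by
  rw [mip_eq_inner_flatten, frob_eq_norm_flatten, frob_eq_norm_flatten]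
  exact abs_real_inner_le_norm _ _

lemma mip_transpose_transpose (A X : Matrix (Fin n) (Fin n) ℝ) : mip Aᵀ Xᵀ = mip A X := by
  rw [mip, mip, transpose_transpose, ← trace_transpose, transpose_mul, transpose_transpose,
    trace_mul_comm]

lemma mip_transpose_left {A X : Matrix (Fin n) (Fin n) ℝ} (hX : Xᵀ = X) : mip Aᵀ X = mip A X := by
  rw [← mip_transpose_transpose, transpose_transpose, hX]

lemma mip_mul_right (A P X : Matrix (Fin n) (Fin n) ℝ) : mip A (P * X) = mip (Pᵀ * A) X := by
  simp [mip, transpose_mul, Matrix.mul_assoc]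

end Frobenius

section Polarization

variable {E F : Type*} [NormedAddCommGroup E] [InnerProductSpace ℝ E]
  [NormedAddCommGroup F] [InnerProductSpace ℝ F]

lemma norm_smul_add_smul_sq (a b : ℝ) (x y : E) :
    ‖a • x + b • y‖ ^ 2 = a ^ 2 * ‖x‖ ^ 2 + 2 * a * b * ⟪x, y⟫_ℝ + b ^ 2 * ‖y‖ ^ 2 := by
  rw [norm_add_sq_real, norm_smul, norm_smul, real_inner_smul_left, real_inner_smul_right,
    mul_pow, mul_pow, Real.norm_eq_abs, Real.norm_eq_abs, sq_abs, sq_abs]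
  ring

theorem abs_inner_sub_inner_le_of_norm_sq {δ : ℝ} {u v : E} {u' v' : F}
    (h : ∀ a b : ℝ, |‖a • u' + b • v'‖ ^ 2 - ‖a • u + b • v‖ ^ 2| ≤ δ * ‖a • u + b • v‖ ^ 2) :
    |⟪u', v'⟫_ℝ - ⟪u, v⟫_ℝ| ≤ δ * ‖u‖ * ‖v‖ := by
  rcases (norm_nonneg u).eq_or_lt with hu | hu
  · have hu0 : u = 0 := norm_eq_zero.mp hu.symm
    have hu'0 : u' = 0 := by simpa [hu0] using h 1 0
    simp [hu0, hu'0]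
  rcases (norm_nonneg v).eq_or_lt with hv | hv
  · have hv0 : v = 0 := norm_eq_zero.mp hv.symm
    have hv'0 : v' = 0 := by simpa [hv0] using h 0 1
    simp [hv0, hv'0]
  set s := ‖u‖
  set t := ‖v‖
  have hplus := abs_le.mp (h t s)
  have hminus := abs_le.mp (h t (-s))
  simp only [norm_smul_add_smul_sq] at hplus hminus
  have hts : 0 < t * s := mul_pos hv hu
  -- subtracting the `(t, -s)` instance from the `(t, s)` one leaves `4ts (⟪u', v'⟫ - ⟪u, v⟫)`,
  -- bounded by the sum `4δs²t²` of the two error terms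
  have key : |t * s * (⟪u', v'⟫_ℝ - ⟪u, v⟫_ℝ)| ≤ t * s * (δ * s * t) := by
    rw [abs_le]
    constructor <;> linarith [hplus, hminus]
  rw [abs_mul, abs_of_pos hts] at key
  exact le_of_mul_le_mul_left key hts

end Polarization

section RIP

variable {n m k : ℕ} {A : Fin m → Matrix (Fin n) (Fin n) ℝ} {δ : ℝ}

/-- Normalized by `1 / √m`, so that `‖measurementMap A X‖²` is the quantity that `RIP` compares
with `frob X ^ 2`. -/
noncomputable def measurementMap (A : Fin m → Matrix (Fin n) (Fin n) ℝ) :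
    Matrix (Fin n) (Fin n) ℝ →ₗ[ℝ] EuclideanSpace ℝ (Fin m) where
  toFun X := WithLp.toLp 2 fun i => mip (A i) X / Real.sqrt m
  map_add' X Y := by ext i; simp [mip_eq_inner_flatten, inner_add_right, add_div]
  map_smul' c X := by ext i; simp [mip_eq_inner_flatten, inner_smul_right, mul_div_assoc]

lemma inner_measurementMap (X Y : Matrix (Fin n) (Fin n) ℝ) :
    ⟪measurementMap A X, measurementMap A Y⟫_ℝ = 1 / m * ∑ i, mip (A i) X * mip (A i) Y := by
  have hm : Real.sqrt m * Real.sqrt m = m := Real.mul_self_sqrt m.cast_nonneg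
  simp only [measurementMap, LinearMap.coe_mk, AddHom.coe_mk, PiLp.inner_apply, Real.inner_apply,
    Finset.mul_sum]
  refine Finset.sum_congr rfl fun i _ => ?_
  rw [div_mul_div_comm, hm]
  ring

theorem RIP.abs_norm_sq_sub_le (h : RIP A k δ) {X : Matrix (Fin n) (Fin n) ℝ} (hX : X.rank ≤ k) :
    |‖measurementMap A X‖ ^ 2 - ‖flatten X‖ ^ 2| ≤ δ * ‖flatten X‖ ^ 2 := by
  obtain ⟨h₁, h₂⟩ := h X hX
  rw [← real_inner_self_eq_norm_sq, inner_measurementMap, ← frob_eq_norm_flatten]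
  simp only [← sq]
  rw [abs_sub_le_iff]
  constructor <;> linarith

theorem RIP.nonneg (h : RIP A k δ) (hn : 0 < n) (hk : 0 < k) : 0 ≤ δ := by
  set e : Fin n → ℝ := Pi.single ⟨0, hn⟩ 1
  obtain ⟨h₁, h₂⟩ := h (vecMulVec e e) ((rank_vecMulVec_le e e).trans hk)
  have he : frob (vecMulVec e e) = 1 := by simp [frob_vecMulVec_self, e]
  rw [he] at h₁ h₂
  linarith

theorem RIP.abs_inner_sub_mip_le (h : RIP A k δ) {X Y : Matrix (Fin n) (Fin n) ℝ}
    (hXY : ∀ a b : ℝ, (a • X + b • Y).rank ≤ k) :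
    |⟪measurementMap A X, measurementMap A Y⟫_ℝ - mip X Y| ≤ δ * frob X * frob Y := by
  rw [mip_eq_inner_flatten, frob_eq_norm_flatten, frob_eq_norm_flatten]
  exact abs_inner_sub_inner_le_of_norm_sq fun a b => by
    simpa only [map_add, map_smul] using h.abs_norm_sq_sub_le (hXY a b)

theorem RIP.abs_inner_sub_mip_sum_le (h : RIP A k δ) {ι : Type*} [Fintype ι]
    {X : Matrix (Fin n) (Fin n) ℝ} {S : ι → Matrix (Fin n) (Fin n) ℝ} (c : ι → ℝ)
    (hS : ∀ j, ∀ a b : ℝ, (a • X + b • S j).rank ≤ k) :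
    |⟪measurementMap A X, measurementMap A (∑ j, c j • S j)⟫_ℝ - mip X (∑ j, c j • S j)| ≤
      δ * frob X * ∑ j, |c j| * frob (S j) := by
  have hsum : ⟪measurementMap A X, measurementMap A (∑ j, c j • S j)⟫_ℝ - mip X (∑ j, c j • S j)
      = ∑ j, c j * (⟪measurementMap A X, measurementMap A (S j)⟫_ℝ - mip X (S j)) := by
    simp only [mip_eq_inner_flatten, map_sum, map_smul, inner_sum, real_inner_smul_right,
      mul_sub, Finset.sum_sub_distrib]
  rw [hsum, Finset.mul_sum]
  refine (Finset.abs_sum_le_sum_abs _ _).trans (Finset.sum_le_sum fun j _ => ?_)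
  rw [abs_mul]
  calc |c j| * |⟪measurementMap A X, measurementMap A (S j)⟫_ℝ - mip X (S j)|
      ≤ |c j| * (δ * frob X * frob (S j)) := by
        gcongr
        exact h.abs_inner_sub_mip_le (hS j)
    _ = δ * frob X * (|c j| * frob (S j)) := by ring

end RIP

section NuclearNorm

variable {n : ℕ}

lemma nuclearNorm_nonneg (M : Matrix (Fin n) (Fin n) ℝ) : 0 ≤ nuclearNorm M :=
  Finset.sum_nonneg fun _ _ => Real.sqrt_nonneg _

lemma nuclearNorm_eq_trace {M : Matrix (Fin n) (Fin n) ℝ} (hM : M.PosSemidef) :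
    nuclearNorm M = M.trace := by
  have hMM := isHermitian_conjTranspose_mul_self M
  -- `MᴴM = M²`, so its eigenvalues are the squares of those of `M`
  have hspec : Multiset.map hMM.eigenvalues Finset.univ.val
      = Multiset.map (fun i => hM.isHermitian.eigenvalues i ^ 2) Finset.univ.val := by
    have h := hMM.roots_charpoly_eq_eigenvalues
    have hsq : (Mᴴ * M).charpoly = (cfc (· ^ 2 : ℝ → ℝ) M).charpoly := by
      rw [cfc_pow_id M 2 hM.isHermitian.isSelfAdjoint, sq, hM.isHermitian.eq]
    rw [hsq, hM.isHermitian.charpoly_cfc_eq, Polynomial.roots_prod _ _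
      (Finset.prod_ne_zero_iff.mpr fun i _ => Polynomial.X_sub_C_ne_zero _)] at h
    simp only [Polynomial.roots_X_sub_C, Multiset.bind_singleton, RCLike.ofReal_real_eq_id, id] at h
    exact h.symm
  have hsum := congrArg (fun s => (s.map Real.sqrt).sum) hspec
  simp only [Multiset.map_map, Function.comp_def] at hsum
  rw [nuclearNorm, hM.isHermitian.trace_eq_sum_eigenvalues]
  refine hsum.trans (Finset.sum_congr rfl fun i _ => ?_)
  exact Real.sqrt_sq (hM.eigenvalues_nonneg i)

lemma nuclearNorm_mul_diagonal_mul_transpose {Q : Matrix (Fin n) (Fin n) ℝ} (hQ : Qᵀ * Q = 1)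
    {d : Fin n → ℝ} (hd : ∀ j, 0 ≤ d j) : nuclearNorm (Q * diagonal d * Qᵀ) = ∑ j, d j := by
  have hPSD : (Q * diagonal d * Qᵀ).PosSemidef := by
    simpa using (posSemidef_diagonal_iff.mpr hd).mul_mul_conjTranspose_same Q
  rw [nuclearNorm_eq_trace hPSD, trace_mul_cycle, hQ, Matrix.one_mul, trace_diagonal]

theorem RIP.abs_inner_sub_mip_le_nuclearNorm {m k : ℕ} {A : Fin m → Matrix (Fin n) (Fin n) ℝ}
    {δ : ℝ} (h : RIP A k δ) {Q : Matrix (Fin n) (Fin n) ℝ} (hQ : Qᵀ * Q = 1) {d : Fin n → ℝ}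
    (hd : ∀ j, 0 ≤ d j) {X : Matrix (Fin n) (Fin n) ℝ} (hX : X.rank + 1 ≤ k) :
    |⟪measurementMap A X, measurementMap A (Q * diagonal d * Qᵀ)⟫_ℝ - mip X (Q * diagonal d * Qᵀ)|
      ≤ δ * frob X * nuclearNorm (Q * diagonal d * Qᵀ) := by
  have hcol : ∀ j, frob (vecMulVec (Qᵀ j) (Qᵀ j)) = 1 := fun j => by
    simpa [frob_vecMulVec_self, dotProduct, mul_apply] using congr_fun (congr_fun hQ j) j
  rw [nuclearNorm_mul_diagonal_mul_transpose hQ hd, mul_diagonal_mul_transpose_eq_sum]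
  refine (h.abs_inner_sub_mip_sum_le d fun j a b => ?_).trans_eq ?_
  · calc (a • X + b • vecMulVec (Qᵀ j) (Qᵀ j)).rank
        ≤ X.rank + 1 := (rank_add_le _ _).trans
          (add_le_add (rank_smul_le _ _) ((rank_smul_le _ _).trans (rank_vecMulVec_le _ _)))
      _ ≤ k := hX
  · simp [hcol, abs_of_nonneg (hd _)]

end NuclearNorm

section Stationarity

variable {n m r k : ℕ} {A : Fin m → Matrix (Fin n) (Fin n) ℝ} {δ : ℝ}

theorem inner_measurementMap_mul_transpose_eq_zero {U V : Matrix (Fin n) (Fin r) ℝ}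
    {R : Matrix (Fin n) (Fin n) ℝ} (hstat : ∑ i, mip (A i) R • (A i * U) = 0) :
    ⟪measurementMap A (V * Uᵀ), measurementMap A R⟫_ℝ = 0 := by
  have hterm : ∀ i,
      mip (A i) (V * Uᵀ) * mip (A i) R = trace ((mip (A i) R • (A i * U))ᵀ * V) := by
    intro i
    rw [mip, transpose_smul, smul_mul, trace_smul, smul_eq_mul, mul_comm, transpose_mul,
      ← trace_mul_cycle, Matrix.mul_assoc]
  rw [inner_measurementMap, Finset.sum_congr rfl fun i _ => hterm i, ← trace_sum,
    ← Matrix.sum_mul, ← transpose_sum, hstat]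
  simp

theorem frob_proj_mul_le_of_stationary (hRIP : RIP A k δ) (hδ : 0 ≤ δ)
    {P Y R M : Matrix (Fin n) (Fin n) ℝ} {ν : ℝ} (hν : 0 ≤ ν) (hPsym : Pᵀ = P)
    (hPidem : P * P = P) (hYsym : Yᵀ = Y) (hMsym : Mᵀ = M) (hYRM : Y = R + M) (hY : Y.rank ≤ k)
    (hR : ⟪measurementMap A (Y * P), measurementMap A R⟫_ℝ = 0)
    (hM : |⟪measurementMap A (Y * P), measurementMap A M⟫_ℝ - mip (Y * P) M|
      ≤ δ * frob (Y * P) * ν) :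
    frob (P * Y) ≤ δ * frob Y + frob (M * P) + δ * ν := by
  set E := P * Y with hE
  have hEt : Eᵀ = Y * P := by rw [transpose_mul, hYsym, hPsym]
  have hPE : Pᵀ * E = E := by rw [hPsym, ← Matrix.mul_assoc, hPidem]
  rw [← hEt] at hR hM
  have hEE : frob E ^ 2 = mip Eᵀ Y := by
    rw [frob_sq, mip_transpose_left hYsym]
    nth_rewrite 2 [hE]
    rw [mip_mul_right, hPE]
  have hEM : mip Eᵀ M = mip E (P * M) := by rw [mip_transpose_left hMsym, mip_mul_right, hPE]
  have hmeas : ⟪measurementMap A Eᵀ, measurementMap A Y⟫_ℝ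
      = ⟪measurementMap A Eᵀ, measurementMap A M⟫_ℝ := by
    rw [hYRM, map_add, inner_add_right, hR, zero_add]
  have hYterm := hRIP.abs_inner_sub_mip_le (X := Eᵀ) (Y := Y) fun a b => by
    rw [hEt, show a • (Y * P) + b • Y = Y * (a • P + b • 1) by
      rw [Matrix.mul_add, Matrix.mul_smul, Matrix.mul_smul, Matrix.mul_one]]
    exact (rank_mul_le_left _ _).trans hY
  have hMterm : mip E (P * M) ≤ frob E * frob (M * P) := by
    calc _ ≤ |mip E (P * M)| := le_abs_self _
      _ ≤ frob E * frob (P * M) := abs_mip_le _ _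
      _ = _ := by rw [← frob_transpose (P * M), transpose_mul, hPsym, hMsym]
  rw [frob_transpose] at hYterm hM
  have key : frob E ^ 2 ≤ frob E * (δ * frob Y + frob (M * P) + δ * ν) := by
    linarith [abs_le.mp hYterm, abs_le.mp hM]
  have hRHS : 0 ≤ δ * frob Y + frob (M * P) + δ * ν := by
    have := frob_nonneg Y
    have := frob_nonneg (M * P)
    positivity
  nlinarith [frob_nonneg E]

end Stationarity

theorem inexact_first_order_condition_general {n m r : ℕ} (hn : 0 < n) (hr : 0 < r)
    (A : Fin m → Matrix (Fin n) (Fin n) ℝ)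
    (δ : ℝ) (hRIP : RIP A (2 * r) δ)
    (Q : Matrix (Fin n) (Fin n) ℝ) (hQ : Qᵀ * Q = 1)
    (lam : Fin n → ℝ) (hlam0 : ∀ i, 0 ≤ lam i)
    (Xstar Xr : Matrix (Fin n) (Fin n) ℝ)
    (hX : Xstar = Q * Matrix.diagonal lam * Qᵀ)
    (hXr : Xr = Q * Matrix.diagonal (fun i : Fin n => if (i : ℕ) < r then lam i else 0) * Qᵀ)
    (U : Matrix (Fin n) (Fin r) ℝ)
    (hstat : ∑ i, mip (A i) (U * Uᵀ - Xstar) • (A i * U) = 0)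
    (P : Matrix (Fin n) (Fin n) ℝ) (hPsym : Pᵀ = P) (hPidem : P * P = P)
    (hPrange : LinearMap.range P.mulVecLin = LinearMap.range U.mulVecLin) :
    frob (U * Uᵀ - P * Xr) ≤
      δ * frob (U * Uᵀ - Xr) + frob ((Xstar - Xr) * P) + δ * nuclearNorm (Xstar - Xr) := by
  set d : Fin n → ℝ := fun i => if (i : ℕ) < r then 0 else lam i
  have hd : ∀ j, 0 ≤ d j := fun j => ite_nonneg le_rfl (hlam0 j)
  have hM : Xstar - Xr = Q * diagonal d * Qᵀ := by
    rw [hX, hXr, mul_diagonal_mul_transpose_sub_ite]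
  obtain ⟨C, hC⟩ := exists_mul_eq_of_range_le hPrange.le
  obtain ⟨D, hD⟩ := exists_mul_eq_of_range_le hPrange.ge
  have hPU : P * U = U := by rw [← hD, ← Matrix.mul_assoc, hPidem]
  have hYsym : (U * Uᵀ - Xr)ᵀ = U * Uᵀ - Xr := by
    rw [transpose_sub, transpose_mul, transpose_transpose, hXr,
      transpose_mul_diagonal_mul_transpose]
  have hYP : (U * Uᵀ - Xr) * P = (C * (U * Uᵀ - Xr))ᵀ * Uᵀ := by
    rw [transpose_mul, hYsym, Matrix.mul_assoc, ← transpose_mul, hC, hPsym]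
  have hrankXr : Xr.rank ≤ r := hXr ▸ (rank_mul_le_left _ _).trans
    ((rank_mul_le_right _ _).trans (rank_diagonal_ite_lt_le lam r))
  have hrankY : (U * Uᵀ - Xr).rank ≤ 2 * r := by
    have := (rank_mul_le_left U Uᵀ).trans (rank_le_width U)
    have := rank_sub_le (U * Uᵀ) Xr
    omega
  have hrankYP : ((U * Uᵀ - Xr) * P).rank + 1 ≤ 2 * r := by
    have : ((C * (U * Uᵀ - Xr))ᵀ * Uᵀ).rank ≤ r :=
      (rank_mul_le_right _ _).trans ((rank_transpose U).trans_le (rank_le_width U))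
    rw [hYP]
    omega
  rw [show U * Uᵀ - P * Xr = P * (U * Uᵀ - Xr) by rw [Matrix.mul_sub, ← Matrix.mul_assoc, hPU]]
  refine frob_proj_mul_le_of_stationary hRIP (hRIP.nonneg hn (by omega)) (nuclearNorm_nonneg _)
    hPsym hPidem hYsym (hM ▸ transpose_mul_diagonal_mul_transpose Q d) (R := U * Uᵀ - Xstar)
    (by abel) hrankY (hYP ▸ inner_measurementMap_mul_transpose_eq_zero hstat) ?_
  rw [hM]
  exact hRIP.abs_inner_sub_mip_le_nuclearNorm hQ hd hrankYP

/-- First-order condition in the approximately-low-rank case. -/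
theorem inexact_first_order_condition {n m r : ℕ} (hn : 0 < n) (hm : 0 < m) (hr : 0 < r)
    (A : Fin m → Matrix (Fin n) (Fin n) ℝ)
    (δ : ℝ) (hRIP : RIP A (2 * r) δ)
    (Q : Matrix (Fin n) (Fin n) ℝ) (hQ : Qᵀ * Q = 1)
    (lam : Fin n → ℝ) (hlam0 : ∀ i, 0 ≤ lam i)
    (hlamdec : ∀ i j : Fin n, i ≤ j → lam j ≤ lam i)
    (Xstar Xr : Matrix (Fin n) (Fin n) ℝ)
    (hX : Xstar = Q * Matrix.diagonal lam * Qᵀ)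
    (hXr : Xr = Q * Matrix.diagonal (fun i : Fin n => if (i : ℕ) < r then lam i else 0) * Qᵀ)
    (U : Matrix (Fin n) (Fin r) ℝ)
    (hstat : ∑ i, mip (A i) (U * Uᵀ - Xstar) • (A i * U) = 0)
    (P : Matrix (Fin n) (Fin n) ℝ) (hPsym : Pᵀ = P) (hPidem : P * P = P)
    (hPrange : LinearMap.range P.mulVecLin = LinearMap.range U.mulVecLin) :
    frob (U * Uᵀ - P * Xr) ≤
      δ * frob (U * Uᵀ - Xr) + frob ((Xstar - Xr) * P) + δ * nuclearNorm (Xstar - Xr) :=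
  inexact_first_order_condition_general hn hr A δ hRIP Q hQ lam hlam0 Xstar Xr hX hXr U hstat P
    hPsym hPidem hPrange
end
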